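/- In the Gel'fand–Dickey setting, for matrix liftings V, W ∈ Γ_Q with associated first-row operators E = −Σ_j V^0_j ∂^j and F = −Σ_j W^0_j ∂^j, the matrix commutator corresponds to the operator commutator modulo L: −ψ([V,W]) = Σ_{l,j=0}^{n}(V^0_j W^j_l − W^0_j V^j_l)∂^l ≡ [E,F] mod right multiples of L, i.e., EF − FE − Σ_{l,j}(V^0_j W^j_l − W^0_j V^j_l)∂^l = RL for some differential operator R. -/

import Mathlib

/-!  A self-contained model of the algebra of pseudodifferential operators on the
circle (or over an abstract differential ring `(R, d)`).

A pseudodifferential operator `A = ∑_{i ≤ N} a_i ∂^i` is encoded by the sequence of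
its coefficients `A : ℤ → R` (`A i = a_i`, vanishing for large `i`).  The product is
the standard one, determined by the generalized Leibniz rule
`∂^i ∘ b = ∑_{k ≥ 0} C(i,k) b^{(k)} ∂^{i-k}` with generalized binomial coefficients
`C(i,k) = Ring.choose i k`. -/

noncomputable section

namespace GD

variable {R : Type} [CommRing R]

/-- Pseudodifferential operators encoded by coefficient sequences:
`A : ℤ → R` stands for `∑ i, (A i) ∂^i`. -/
abbrev PDO (R : Type) := ℤ → R

/-- The product of pseudodifferential operators, with respect to the derivation `d`
of the coefficient ring.  (The `finsum` is a finite sum whenever the two factors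
have bounded order, which is the case throughout.) -/
def pmul (d : R → R) (A B : PDO R) : PDO R :=
  fun m => ∑ᶠ p : ℤ × ℕ,
    (Ring.choose p.1 p.2 : ℤ) • (A p.1 * d^[p.2] (B (m - p.1 + (p.2 : ℤ))))

/-- The single-term operator `a ∂^j`. -/
def term (a : R) (j : ℤ) : PDO R := fun m => if m = j then a else 0

/-- The identity operator `1 = ∂^0`. -/
def one : PDO R := term (1 : R) 0

/-- The purely differential part `A₊` of a pseudodifferential operator
(the part with nonnegative powers of `∂`); `A₋ = A - A₊`. -/
def plus (A : PDO R) : PDO R := fun m => if 0 ≤ m then A m else 0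

/-- `d` is a derivation of `R`. -/
def IsDeriv (d : R → R) : Prop :=
  (∀ a b, d (a + b) = d a + d b) ∧ ∀ a b, d (a * b) = d a * b + a * d b

end GD

/-!
Write `E_k = -∑_l V^k_l ∂^l`, so `E = E_0`. Coefficient by coefficient, the lifting recursion
says exactly `∂ E_k = E_{k+1} - V^k_n L`, and by induction `∂^k E = E_k + R_k L` for `k ≤ n`,
with `R_0 = 0` and `R_{k+1} = ∂ R_k - V^k_n`. The only associativity this uses is
`∂ (A B) = (∂ A) B`, which is Pascal's rule in the Leibniz expansion of `∂^i ∘ B`.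
Expanding `E F = -∑_j V^0_j ∂^j F` and substituting `∂^j F = F_j + R^W_j L` (and symmetrically
for `F E`) gives
`[E, F] = ∑_{l,j} (V^0_j W^j_l - W^0_j V^j_l) ∂^l + (∑_j W^0_j R^V_j - V^0_j R^W_j) L`.
-/

namespace GD

open Finset

variable {R : Type} [CommRing R] {d : R → R}

section Derivation

def IsDeriv.toAddMonoidHom (hd : IsDeriv d) : R →+ R := AddMonoidHom.mk' d hd.1

lemma IsDeriv.map_zero (hd : IsDeriv d) : d 0 = 0 := _root_.map_zero hd.toAddMonoidHom

lemma IsDeriv.map_sum (hd : IsDeriv d) {ι : Type*} (s : Finset ι) (f : ι → R) :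
    d (∑ i ∈ s, f i) = ∑ i ∈ s, d (f i) :=
  _root_.map_sum hd.toAddMonoidHom f s

lemma IsDeriv.map_nsmul (hd : IsDeriv d) (k : ℕ) (a : R) : d (k • a) = k • d a :=
  _root_.map_nsmul hd.toAddMonoidHom k a

end Derivation

section DiffOps

variable (R) in
def diffOpsLE (N : ℕ) : Submodule R (PDO R) := Submodule.pi (Set.Icc 0 (N : ℤ))ᶜ fun _ => ⊥

lemma mem_diffOpsLE {N : ℕ} {A : PDO R} :
    A ∈ diffOpsLE R N ↔ ∀ m, (m < 0 ∨ (N : ℤ) < m) → A m = 0 := by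
  simp only [diffOpsLE, Submodule.mem_pi, Set.mem_compl_iff, Set.mem_Icc, Submodule.mem_bot]
  refine forall_congr' fun m => ?_
  constructor <;> intro h hm <;> apply h <;> omega

lemma diffOpsLE_mono {N M : ℕ} (h : N ≤ M) : diffOpsLE R N ≤ diffOpsLE R M := fun _ hA =>
  mem_diffOpsLE.2 fun m hm => mem_diffOpsLE.1 hA m (by omega)

lemma term_mem_diffOpsLE (a : R) {j N : ℕ} (hj : j ≤ N) : term a j ∈ diffOpsLE R N :=
  mem_diffOpsLE.2 fun _ hm => if_neg (by omega)

/-- `del d X` is the product `∂ ∘ X = ∑ (X_{m-1} + X_m') ∂^m`. -/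
def del (d : R → R) (X : PDO R) : PDO R := fun m => X (m - 1) + d (X m)

def IsDeriv.delHom (hd : IsDeriv d) : PDO R →+ PDO R :=
  AddMonoidHom.mk' (del d) fun X Y => funext fun m => by
    simp only [del, Pi.add_apply, hd.1]
    abel

lemma del_sum (hd : IsDeriv d) {ι : Type*} (s : Finset ι) (X : ι → PDO R) :
    del d (∑ i ∈ s, X i) = ∑ i ∈ s, del d (X i) :=
  map_sum hd.delHom X s

lemma del_sub (hd : IsDeriv d) (X Y : PDO R) : del d (X - Y) = del d X - del d Y :=
  map_sub hd.delHom X Y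

lemma iterate_del_neg (hd : IsDeriv d) (k : ℕ) (X : PDO R) :
    (del d)^[k] (-X) = -(del d)^[k] X :=
  iterate_map_neg hd.delHom k X

lemma del_smul (hd : IsDeriv d) (c : R) (X : PDO R) :
    del d (c • X) = d c • X + c • del d X := by
  funext m
  simp only [del, Pi.smul_apply, Pi.add_apply, smul_eq_mul, hd.2]
  ring

lemma del_mem_diffOpsLE (hd : IsDeriv d) {N : ℕ} {X : PDO R} (hX : X ∈ diffOpsLE R N) :
    del d X ∈ diffOpsLE R (N + 1) := by
  rw [mem_diffOpsLE] at hX ⊢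
  intro m hm
  simp only [del, hX m (by omega), hX (m - 1) (by omega), hd.map_zero, add_zero]

lemma iterate_del_apply (hd : IsDeriv d) (i : ℕ) (B : PDO R) (m : ℤ) :
    (del d)^[i] B m = ∑ p ∈ antidiagonal i, i.choose p.1 • d^[p.1] (B (m - p.2)) := by
  induction i generalizing m with
  | zero => simp
  | succ i ih =>
    rw [Function.iterate_succ_apply', del, ih, ih, sum_antidiagonal_choose_succ_nsmul
      (fun k j => d^[k] (B (m - j))), hd.map_sum]
    congr 1
    · refine sum_congr rfl fun p _ => ?_
      push_cast
      ring_nf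
    · refine sum_congr rfl fun p hp => ?_
      rw [hd.map_nsmul, Nat.choose_symm_of_eq_add (mem_antidiagonal.1 hp).symm,
        Function.iterate_succ_apply']

end DiffOps

section MulRight

def mulRight (d : R → R) (N : ℕ) (B : PDO R) : PDO R →ₗ[R] PDO R :=
  ∑ i ∈ range (N + 1), (LinearMap.proj (i : ℤ)).smulRight ((del d)^[i] B)

lemma mulRight_apply (N : ℕ) (A B : PDO R) :
    mulRight d N B A = ∑ i ∈ range (N + 1), A i • (del d)^[i] B := by
  simp [mulRight]

lemma pmul_eq_mulRight (hd : IsDeriv d) {N : ℕ} {A : PDO R} (hA : A ∈ diffOpsLE R N)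
    (B : PDO R) : pmul d A B = mulRight d N B A := by
  rw [mem_diffOpsLE] at hA
  funext m
  set f : ℤ × ℕ → R := fun p =>
    (Ring.choose p.1 p.2 : ℤ) • (A p.1 * d^[p.2] (B (m - p.1 + (p.2 : ℤ))))
  have hsupp : Function.support f ⊆
      ((range (N + 1)).image Nat.cast ×ˢ range (N + 1) : Finset (ℤ × ℕ)) := by
    rintro ⟨i, k⟩ hp
    have hAi : A i ≠ 0 := fun h => hp (by simp [f, h])
    lift i to ℕ using not_lt.1 fun h => hAi (hA i (Or.inl h))
    have hiN : i ≤ N := by by_contra h; exact hAi (hA i (Or.inr (by omega)))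
    have hki : k ≤ i := by
      by_contra h
      exact hp (by simp [f, Ring.choose_natCast, Nat.choose_eq_zero_of_lt (not_le.1 h)])
    simp only [coe_product, Set.mem_prod, coe_image, coe_range, Set.mem_image, Set.mem_Iio]
    exact ⟨⟨i, by omega, rfl⟩, by omega⟩
  rw [pmul, finsum_eq_sum_of_support_subset f hsupp, sum_product,
    sum_image fun _ _ _ _ h => Nat.cast_injective h, mulRight_apply, Finset.sum_apply]
  refine sum_congr rfl fun i hi => ?_
  have hi : i ≤ N := Nat.lt_succ_iff.1 (mem_range.1 hi)
  rw [Pi.smul_apply, smul_eq_mul, iterate_del_apply hd, Nat.sum_antidiagonal_eq_sum_range_succ_mk,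
    mul_sum, ← sum_subset (range_subset_range.2 (Nat.succ_le_succ hi))]
  · refine sum_congr rfl fun k hk => ?_
    have hk : k ≤ i := Nat.lt_succ_iff.1 (mem_range.1 hk)
    simp only [f, Ring.choose_natCast, natCast_zsmul, mul_smul_comm, Nat.cast_sub hk]
    ring_nf
  · intro k _ hk
    simp [f, Ring.choose_natCast, Nat.choose_eq_zero_of_lt (by simpa using hk)]

lemma mulRight_term (N : ℕ) (B : PDO R) (a : R) {j : ℕ} (hj : j ≤ N) :
    mulRight d N B (term a j) = a • (del d)^[j] B := by
  simp [mulRight_apply, term, ite_smul, hj]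

lemma del_pmul (hd : IsDeriv d) {N : ℕ} {X : PDO R} (hX : X ∈ diffOpsLE R N) (Y : PDO R) :
    del d (pmul d X Y) = pmul d (del d X) Y := by
  have hX' := mem_diffOpsLE.1 hX
  rw [pmul_eq_mulRight hd hX, pmul_eq_mulRight hd (del_mem_diffOpsLE hd hX), mulRight_apply,
    mulRight_apply, del_sum hd]
  simp only [del_smul hd, sum_add_distrib, del, add_smul]
  rw [sum_range_succ' _ (N + 1), sum_range_succ _ (N + 1), hX' (N + 1 : ℕ) (by omega),
    hX' ((0 : ℕ) - 1) (by omega), hd.map_zero]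
  simp only [zero_smul, add_zero, Function.iterate_succ_apply', Nat.cast_succ, add_sub_cancel_right]
  exact add_comm _ _

lemma pmul_sub_left (hd : IsDeriv d) {N : ℕ} {A A' : PDO R} (hA : A ∈ diffOpsLE R N)
    (hA' : A' ∈ diffOpsLE R N) (B : PDO R) :
    pmul d (A - A') B = pmul d A B - pmul d A' B := by
  rw [pmul_eq_mulRight hd (sub_mem hA hA'), pmul_eq_mulRight hd hA, pmul_eq_mulRight hd hA',
    map_sub]

lemma pmul_sum_smul_left (hd : IsDeriv d) {ι : Type*} {s : Finset ι} {N : ℕ} {A : ι → PDO R}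
    (hA : ∀ i ∈ s, A i ∈ diffOpsLE R N) (c : ι → R) (B : PDO R) :
    pmul d (∑ i ∈ s, c i • A i) B = ∑ i ∈ s, c i • pmul d (A i) B := by
  rw [pmul_eq_mulRight hd (sum_mem fun i hi => Submodule.smul_mem _ _ (hA i hi)), map_sum]
  exact sum_congr rfl fun i hi => by rw [map_smul, pmul_eq_mulRight hd (hA i hi)]

end MulRight

section Lifting

variable (d) (n : ℕ) (u : ℕ → R) (V : ℕ → ℕ → R)

def gdL : PDO R := term 1 ((n : ℤ) + 1) - ∑ j ∈ range n, term (u j) (j : ℤ)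

/-- `row n V k = -E_k`, the first-row operator of the `k`-th row of the lifting. -/
def row (k : ℕ) : PDO R := ∑ j ∈ range (n + 1), term (V k j) (j : ℤ)

/-- The recursion (5.9) over the companion matrix of `L`, with `λ = 0`. -/
def IsLifting : Prop :=
  (∀ k < n, V (k + 1) 0 = d (V k 0) + V k n * u 0) ∧
    ∀ k < n, ∀ l, 1 ≤ l → l ≤ n → V (k + 1) l = d (V k l) + V k (l - 1) + u l * V k n

/-- The operator `R_k` with `∂^k E = E_k + R_k L`. -/
def rem : ℕ → PDO R
  | 0 => 0
  | k + 1 => del d (rem k) - term (V k n) 0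

variable {d n u V}

lemma row_mem (k : ℕ) : row n V k ∈ diffOpsLE R n :=
  sum_mem fun _ hj => term_mem_diffOpsLE _ (Nat.lt_succ_iff.1 (mem_range.1 hj))

lemma rem_mem (hd : IsDeriv d) (k : ℕ) : rem d n V k ∈ diffOpsLE R k := by
  induction k with
  | zero => exact zero_mem _
  | succ k ih => exact sub_mem (del_mem_diffOpsLE hd ih) (term_mem_diffOpsLE _ (Nat.zero_le _))

lemma gdL_mem : gdL n u ∈ diffOpsLE R (n + 1) :=
  sub_mem (term_mem_diffOpsLE _ le_rfl)
    (sum_mem fun j hj => term_mem_diffOpsLE _ (by have := mem_range.1 hj; omega))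

lemma row_apply_natCast (k l : ℕ) : row n V k l = if l ≤ n then V k l else 0 := by
  simp [row, term, Finset.sum_apply]

lemma gdL_apply_natCast (hun : u n = 0) (l : ℕ) :
    gdL n u l = if l = n + 1 then 1 else if l ≤ n then -u l else 0 := by
  have hcast : ((l : ℤ) = n + 1) ↔ l = n + 1 := by omega
  simp only [gdL, term, Pi.sub_apply, Finset.sum_apply, Nat.cast_inj, sum_ite_eq, mem_range, hcast]
  rcases lt_trichotomy l n with hl | rfl | hl
  · simp [hl, hl.le, (show l ≠ n + 1 by omega)]
  · simp [hun]
  · simp [hl.not_gt, hl.not_ge]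

lemma del_row (hd : IsDeriv d) (hun : u n = 0) (hV : IsLifting d n u V) {k : ℕ} (hk : k < n) :
    del d (row n V k) = row n V (k + 1) + V k n • gdL n u := by
  funext m
  simp only [del, Pi.add_apply, Pi.smul_apply, smul_eq_mul]
  rcases lt_or_ge m 0 with hm | hm
  · simp only [mem_diffOpsLE.1 (row_mem _) m (.inl hm), mem_diffOpsLE.1 (row_mem _) (m - 1)
      (.inl (by omega)), mem_diffOpsLE.1 gdL_mem m (.inl hm), hd.map_zero, mul_zero, add_zero]
  lift m to ℕ using hm
  rw [row_apply_natCast, row_apply_natCast, gdL_apply_natCast hun]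
  rcases m with _ | l
  · rw [mem_diffOpsLE.1 (row_mem _) _ (.inl (by omega))]
    simp [hV.1 k hk]
  · have hcast : ((l + 1 : ℕ) : ℤ) - 1 = l := by push_cast; ring
    rw [hcast, row_apply_natCast]
    rcases lt_trichotomy l n with hl | rfl | hl
    · simp [hl.le, hl.ne, Nat.succ_le_of_lt hl, hV.2 k hk (l + 1) (by omega) (by omega)]
      ring
    · simp [hd.map_zero]
    · simp [hd.map_zero, hl.ne', hl.not_ge, hl.not_gt]

lemma iterate_del_row (hd : IsDeriv d) (hun : u n = 0) (hV : IsLifting d n u V) {k : ℕ}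
    (hk : k ≤ n) : (del d)^[k] (row n V 0) = row n V k - pmul d (rem d n V k) (gdL n u) := by
  induction k with
  | zero => rw [rem, pmul_eq_mulRight hd (zero_mem (diffOpsLE R 0)), map_zero, sub_zero]; rfl
  | succ k ih =>
    have hrem := rem_mem (n := n) (V := V) hd k
    have hterm : term (V k n) 0 ∈ diffOpsLE R (k + 1) := by
      exact_mod_cast term_mem_diffOpsLE (V k n) (Nat.zero_le (k + 1))
    have hterm_mul : mulRight d (k + 1) (gdL n u) (term (V k n) 0) = V k n • gdL n u := by
      exact_mod_cast mulRight_term (k + 1) (gdL n u) (V k n) (Nat.zero_le _)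
    rw [Function.iterate_succ_apply', ih (by omega), del_sub hd, del_row hd hun hV (by omega),
      del_pmul hd hrem, rem, pmul_eq_mulRight hd (sub_mem (del_mem_diffOpsLE hd hrem) hterm),
      map_sub, hterm_mul, ← pmul_eq_mulRight hd (del_mem_diffOpsLE hd hrem)]
    abel

lemma pmul_neg_row_neg_row (hd : IsDeriv d) (hun : u n = 0) (V : ℕ → ℕ → R)
    {W : ℕ → ℕ → R} (hW : IsLifting d n u W) :
    pmul d (-row n V 0) (-row n W 0)
      = ∑ j ∈ range (n + 1), V 0 j • (row n W j - pmul d (rem d n W j) (gdL n u)) := by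
  rw [pmul_eq_mulRight hd (neg_mem (row_mem 0)), map_neg, row.eq_1 n V 0, map_sum,
    ← sum_neg_distrib]
  refine sum_congr rfl fun j hj => ?_
  have hj : j ≤ n := Nat.lt_succ_iff.1 (mem_range.1 hj)
  rw [mulRight_term _ _ _ hj, iterate_del_neg hd, iterate_del_row hd hun hW hj, smul_neg, neg_neg]

lemma sum_smul_row_sub_sum_smul_row (a b : ℕ → R) (V W : ℕ → ℕ → R) :
    ∑ j ∈ range (n + 1), a j • row n W j - ∑ j ∈ range (n + 1), b j • row n V j
      = ∑ l ∈ range (n + 1), term (∑ j ∈ range (n + 1), (a j * W j l - b j * V j l)) l := by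
  funext m
  simp only [row, smul_sum, ← sum_sub_distrib, Finset.sum_apply, Pi.sub_apply, Pi.smul_apply,
    term, smul_eq_mul, mul_ite, mul_zero]
  rw [sum_comm]
  refine sum_congr rfl fun l _ => ?_
  split_ifs <;> simp

variable (d n) in
def commutatorRem (V W : ℕ → ℕ → R) : PDO R :=
  ∑ j ∈ range (n + 1), W 0 j • rem d n V j - ∑ j ∈ range (n + 1), V 0 j • rem d n W j

lemma rem_mem_of_mem_range (hd : IsDeriv d) {j : ℕ} (hj : j ∈ range (n + 1)) :
    rem d n V j ∈ diffOpsLE R n :=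
  diffOpsLE_mono (Nat.lt_succ_iff.1 (mem_range.1 hj)) (rem_mem hd j)

lemma smul_rem_mem (hd : IsDeriv d) (a : ℕ → R) (V : ℕ → ℕ → R) :
    ∑ j ∈ range (n + 1), a j • rem d n V j ∈ diffOpsLE R n :=
  sum_mem fun _ hj => Submodule.smul_mem _ _ (rem_mem_of_mem_range hd hj)

lemma commutatorRem_mem (hd : IsDeriv d) (V W : ℕ → ℕ → R) :
    commutatorRem d n V W ∈ diffOpsLE R n :=
  sub_mem (smul_rem_mem hd _ V) (smul_rem_mem hd _ W)

lemma pmul_commutatorRem (hd : IsDeriv d) (V W : ℕ → ℕ → R) (B : PDO R) :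
    pmul d (commutatorRem d n V W) B
      = ∑ j ∈ range (n + 1), W 0 j • pmul d (rem d n V j) B
        - ∑ j ∈ range (n + 1), V 0 j • pmul d (rem d n W j) B := by
  rw [commutatorRem, pmul_sub_left hd (smul_rem_mem hd _ V) (smul_rem_mem hd _ W),
    pmul_sum_smul_left hd fun _ => rem_mem_of_mem_range hd,
    pmul_sum_smul_left hd fun _ => rem_mem_of_mem_range hd]

end Lifting

end GD

open GD in
theorem gd_matrix_commutator_mod_L_general {R : Type} [CommRing R] (d : R → R)
    (hd : GD.IsDeriv d)
    (n : ℕ) (u : ℕ → R) (hun : u n = 0)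
    (V W : ℕ → ℕ → R)
    (hrec0V : ∀ k < n, V (k + 1) 0 = d (V k 0) + V k n * u 0)
    (hreclV : ∀ k < n, ∀ l, 1 ≤ l → l ≤ n →
      V (k + 1) l = d (V k l) + V k (l - 1) + u l * V k n)
    (hrec0W : ∀ k < n, W (k + 1) 0 = d (W k 0) + W k n * u 0)
    (hreclW : ∀ k < n, ∀ l, 1 ≤ l → l ≤ n →
      W (k + 1) l = d (W k l) + W k (l - 1) + u l * W k n)
    (L E F : PDO R)
    (hL : L = term 1 ((n : ℤ) + 1) - ∑ j ∈ Finset.range n, term (u j) (j : ℤ))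
    (hE : E = - ∑ j ∈ Finset.range (n + 1), term (V 0 j) (j : ℤ))
    (hF : F = - ∑ j ∈ Finset.range (n + 1), term (W 0 j) (j : ℤ)) :
    ∃ Rop : PDO R, (∀ m : ℤ, m < 0 → Rop m = 0) ∧
      (∃ N : ℤ, ∀ m : ℤ, N < m → Rop m = 0) ∧
      pmul d E F - pmul d F E
        - (∑ l ∈ Finset.range (n + 1),
            term (∑ j ∈ Finset.range (n + 1),
              (V 0 j * W j l - W 0 j * V j l)) (l : ℤ))
        = pmul d Rop L := by
  have hRop := commutatorRem_mem (n := n) hd V W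
  refine ⟨commutatorRem d n V W, fun m hm => mem_diffOpsLE.1 hRop m (.inl hm),
    ⟨n, fun m hm => mem_diffOpsLE.1 hRop m (.inr hm)⟩, ?_⟩
  subst hL hE hF
  rw [← sum_smul_row_sub_sum_smul_row, ← row, ← row, ← gdL,
    pmul_neg_row_neg_row hd hun V ⟨hrec0W, hreclW⟩,
    pmul_neg_row_neg_row hd hun W ⟨hrec0V, hreclV⟩, pmul_commutatorRem hd]
  simp only [smul_sub, Finset.sum_sub_distrib]
  abel

open GD in
/-- for matrix liftings `V, W ∈ Γ_Q` (satisfying the recursion (5.9)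
with `λ = 0` over the companion matrix `Q`), with first-row operators
`E = -∑_j V^0_j ∂^j` and `F = -∑_j W^0_j ∂^j`, the matrix commutator corresponds to
the operator commutator modulo right multiples of `L`:
`[E,F] - ∑_{l,j} (V^0_j W^j_l - W^0_j V^j_l) ∂^l = R L`
for some differential operator `R`; equivalently
`-ψ([V,W]) = ∑_{l,j}(V^0_j W^j_l - W^0_j V^j_l)∂^l ≡ [E,F] mod L`. -/
theorem gd_matrix_commutator_mod_L {R : Type} [CommRing R] (d : R → R)
    (hd : GD.IsDeriv d)
    (n : ℕ) (hn : 0 < n) (u : ℕ → R) (hun : u n = 0)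
    (V W : ℕ → ℕ → R)
    (hrec0V : ∀ k < n, V (k + 1) 0 = d (V k 0) + V k n * u 0)
    (hreclV : ∀ k < n, ∀ l, 1 ≤ l → l ≤ n →
      V (k + 1) l = d (V k l) + V k (l - 1) + u l * V k n)
    (hrec0W : ∀ k < n, W (k + 1) 0 = d (W k 0) + W k n * u 0)
    (hreclW : ∀ k < n, ∀ l, 1 ≤ l → l ≤ n →
      W (k + 1) l = d (W k l) + W k (l - 1) + u l * W k n)
    (htrV : ∑ k ∈ Finset.range (n + 1), V k k = 0)
    (htrW : ∑ k ∈ Finset.range (n + 1), W k k = 0)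
    (L E F : PDO R)
    (hL : L = term 1 ((n : ℤ) + 1) - ∑ j ∈ Finset.range n, term (u j) (j : ℤ))
    (hE : E = - ∑ j ∈ Finset.range (n + 1), term (V 0 j) (j : ℤ))
    (hF : F = - ∑ j ∈ Finset.range (n + 1), term (W 0 j) (j : ℤ)) :
    ∃ Rop : PDO R, (∀ m : ℤ, m < 0 → Rop m = 0) ∧
      (∃ N : ℤ, ∀ m : ℤ, N < m → Rop m = 0) ∧
      pmul d E F - pmul d F E
        - (∑ l ∈ Finset.range (n + 1),
            term (∑ j ∈ Finset.range (n + 1),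
              (V 0 j * W j l - W 0 j * V j l)) (l : ℤ))
        = pmul d Rop L :=
  gd_matrix_commutator_mod_L_general d hd n u hun V W hrec0V hreclV hrec0W hreclW L E F hL hE hF
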